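/- With (L, [·,·], ρ) and (L', [·,·]', ρ') a dual pair of Lie–Rinehart algebras over R, the failure of E to be tensorial in its first argument is measured by the symmetrized anchor pairing: for all a ∈ L, α ∈ L' and f, g ∈ R, E(g•a, α)(f) = g·E(a,α)(f) − ⟨a,α⟩·(ρ'(d g)(f) + ρ'(d f)(g)). -/

import Mathlib

/-- A Lie–Rinehart algebra over a commutative `ℝ`-algebra `R`. -/
structure LieRinehart (R : Type*) [CommRing R] [Algebra ℝ R]
    (L : Type*) [AddCommGroup L] [Module R L] where
  bracket : L → L → L
  bracket_add_left : ∀ x y z : L, bracket (x + y) z = bracket x z + bracket y z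
  bracket_add_right : ∀ x y z : L, bracket x (y + z) = bracket x y + bracket x z
  bracket_real_left : ∀ (r : ℝ) (x y : L),
    bracket ((algebraMap ℝ R r) • x) y = (algebraMap ℝ R r) • bracket x y
  bracket_real_right : ∀ (r : ℝ) (x y : L),
    bracket x ((algebraMap ℝ R r) • y) = (algebraMap ℝ R r) • bracket x y
  bracket_antisymm : ∀ x y : L, bracket x y = - bracket y x
  bracket_jacobi : ∀ x y z : L,
    bracket x (bracket y z) = bracket (bracket x y) z + bracket y (bracket x z)
  anchor : L →ₗ[R] Derivation ℝ R R
  anchor_bracket : ∀ x y : L, anchor (bracket x y) = ⁅anchor x, anchor y⁆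
  leibniz : ∀ (f : R) (x y : L),
    bracket x (f • y) = f • bracket x y + (anchor x f) • y

/-- A dual pair of Lie–Rinehart algebras over `R`: two Lie–Rinehart algebras `L`, `L'`
with a nondegenerate `R`-bilinear pairing, Lie derivative operators `𝓛 : L × L' → L'`
and `𝓛 : L' × L → L` characterized by the usual formulas, and a map `d : R → L'`
characterized by `⟨a, d f⟩ = ρ(a)(f)`. -/
structure LieRinehartDualPair (R : Type*) [CommRing R] [Algebra ℝ R]
    (L L' : Type*) [AddCommGroup L] [Module R L] [AddCommGroup L'] [Module R L'] where
  lr : LieRinehart R L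
  lr' : LieRinehart R L'
  pair : L →ₗ[R] L' →ₗ[R] R
  nondeg_left : ∀ a : L, (∀ α : L', pair a α = 0) → a = 0
  nondeg_right : ∀ α : L', (∀ a : L, pair a α = 0) → α = 0
  lie : L → L' → L'
  lie' : L' → L → L
  lie_spec : ∀ (a a' : L) (α : L'),
    pair a' (lie a α) = lr.anchor a (pair a' α) - pair (lr.bracket a a') α
  lie'_spec : ∀ (α α' : L') (a : L),
    pair (lie' α a) α' = lr'.anchor α (pair a α') - pair a (lr'.bracket α α')
  d : R → L'
  d_spec : ∀ (a : L) (f : R), pair a (d f) = lr.anchor a f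

variable {R : Type*} [CommRing R] [Algebra ℝ R]
variable {L L' : Type*} [AddCommGroup L] [Module R L] [AddCommGroup L'] [Module R L']

/-- `(δa)(α₁,α₂) = ρ'(α₁)⟨a,α₂⟩ − ρ'(α₂)⟨a,α₁⟩ − ⟨a,[α₁,α₂]'⟩`. -/
def LieRinehartDualPair.delta (P : LieRinehartDualPair R L L') (a : L) (α₁ α₂ : L') : R :=
  P.lr'.anchor α₁ (P.pair a α₂) - P.lr'.anchor α₂ (P.pair a α₁)
    - P.pair a (P.lr'.bracket α₁ α₂)

/-- `[δa₁, a₂](α₁,α₂) = −ρ(a₂)((δa₁)(α₁,α₂)) + (δa₁)(𝓛_{a₂}α₁, α₂) + (δa₁)(α₁, 𝓛_{a₂}α₂)`. -/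
def LieRinehartDualPair.deltaBracket (P : LieRinehartDualPair R L L')
    (a₁ a₂ : L) (α₁ α₂ : L') : R :=
  - P.lr.anchor a₂ (P.delta a₁ α₁ α₂) + P.delta a₁ (P.lie a₂ α₁) α₂
    + P.delta a₁ α₁ (P.lie a₂ α₂)

/-- The bialgebroid defect
`D(a₁,a₂)(α₁,α₂) = (δ[a₁,a₂])(α₁,α₂) − [δa₁,a₂](α₁,α₂) − [a₁,δa₂](α₁,α₂)`,
where `[a₁, δa₂] = −[δa₂, a₁]`. -/
def LieRinehartDualPair.D (P : LieRinehartDualPair R L L') (a₁ a₂ : L) (α₁ α₂ : L') : R :=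
  P.delta (P.lr.bracket a₁ a₂) α₁ α₂ - P.deltaBracket a₁ a₂ α₁ α₂
    + P.deltaBracket a₂ a₁ α₁ α₂

/-- `E(a,α)(f) = [ρ(a),ρ'(α)](f) − ρ'(𝓛_a α)(f) + ρ(𝓛_α a)(f) − ρ'(d f)(⟨a,α⟩)`. -/
def LieRinehartDualPair.E (P : LieRinehartDualPair R L L') (a : L) (α : L') (f : R) : R :=
  ⁅P.lr.anchor a, P.lr'.anchor α⁆ f - P.lr'.anchor (P.lie a α) f
    + P.lr.anchor (P.lie' α a) f - P.lr'.anchor (P.d f) (P.pair a α)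

/-! Both Lie derivatives are first-order differential operators in the `L`-slot:
`𝓛_{g•a} α = g•𝓛_a α + ⟨a,α⟩•dg` and `𝓛_α (g•a) = g•𝓛_α a + ρ'(α)(g)•a`, each checked against
the nondegenerate pairing. Substituting into `E(g•a,α)(f)` and expanding with the Leibniz rule,
the term `ρ'(α)(g)·ρ(a)(f)` of the commutator cancels the one coming from `ρ(𝓛_α(g•a))`, and
what survives besides `g·E(a,α)(f)` is `-⟨a,α⟩·ρ'(dg)(f)` from `ρ'(𝓛_{g•a}α)` and
`-⟨a,α⟩·ρ'(df)(g)` from `ρ'(df)(⟨g•a,α⟩)`. -/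

theorem LieRinehart.bracket_smul_left (A : LieRinehart R L) (g : R) (a a' : L) :
    A.bracket (g • a) a' = g • A.bracket a a' - A.anchor a' g • a := by
  rw [A.bracket_antisymm (g • a) a', A.leibniz, A.bracket_antisymm a' a]
  module

namespace LieRinehartDualPair

variable (P : LieRinehartDualPair R L L')

theorem ext_left {a b : L} (h : ∀ α, P.pair a α = P.pair b α) : a = b :=
  sub_eq_zero.mp <| P.nondeg_left _ fun α => by
    rw [map_sub, LinearMap.sub_apply, h, sub_self]

theorem ext_right {α β : L'} (h : ∀ a, P.pair a α = P.pair a β) : α = β :=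
  sub_eq_zero.mp <| P.nondeg_right _ fun a => by rw [map_sub, h, sub_self]

theorem lie_smul_left (g : R) (a : L) (α : L') :
    P.lie (g • a) α = g • P.lie a α + P.pair a α • P.d g := by
  refine P.ext_right fun a' => ?_
  simp only [P.lie_spec, map_add, map_smul, P.d_spec, P.lr.bracket_smul_left, map_sub,
    LinearMap.sub_apply, LinearMap.smul_apply, Derivation.smul_apply, smul_eq_mul]
  ring

theorem lie'_smul_right (g : R) (α : L') (a : L) :
    P.lie' α (g • a) = g • P.lie' α a + P.lr'.anchor α g • a := by
  refine P.ext_left fun α' => ?_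
  simp only [P.lie'_spec, map_add, map_smul, LinearMap.add_apply, LinearMap.smul_apply,
    Derivation.leibniz, smul_eq_mul]
  ring

end LieRinehartDualPair

/-- the failure of `E` to be tensorial in its first argument is measured
by the symmetrized anchor pairing. -/
theorem E_smul_first
    (P : LieRinehartDualPair R L L') :
    ∀ (a : L) (α : L') (f g : R),
      P.E (g • a) α f
        = g * P.E a α f
          - P.pair a α * (P.lr'.anchor (P.d g) f + P.lr'.anchor (P.d f) g) := by
  intro a α f g
  simp only [LieRinehartDualPair.E, P.lie_smul_left, P.lie'_smul_right, map_add, map_smul,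
    Derivation.commutator_apply, LinearMap.smul_apply, Derivation.add_apply,
    Derivation.smul_apply, smul_eq_mul, Derivation.leibniz]
  ring
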